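/- arXiv:2308.12716 — 2 statements merged into one kernel-verified Lean document; each statement's English description precedes it below -/
import Mathlib

section
/- The squared Fischer-Burmeister function (a,b) ↦ (a + b − √(a² + b²))² is continuously differentiable on all of ℝ², including at the origin (a,b) = (0,0). -/
/-!
The function φ vanishes at the origin, is smooth away from it, and is Lipschitz, since
`√(a² + b²)` is the Euclidean norm. The square of any such function `g` is `O(‖x - x₀‖²)` at its
zero `x₀`, hence has derivative `0` there, and elsewhere has derivative `2 g g'`. As `‖g'‖` is
bounded by the Lipschitz constant while `g → 0`, this derivative is continuous at `x₀` as well.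
-/

open Filter Topology Asymptotics NNReal

section SquareOfLipschitz

variable {E : Type*} [NormedAddCommGroup E] [NormedSpace ℝ E] {g : E → ℝ} {K : ℝ≥0} {x₀ : E}

theorem hasFDerivAt_sq_of_lipschitzWith_of_eq_zero (hg : LipschitzWith K g) (hx₀ : g x₀ = 0) :
    HasFDerivAt (fun x => g x ^ 2) (0 : E →L[ℝ] ℝ) x₀ := by
  have hquadratic : (fun x => g x ^ 2) =O[𝓝 x₀] fun x => ‖x - x₀‖ ^ 2 := by
    refine IsBigO.of_bound ((K : ℝ) ^ 2) (Eventually.of_forall fun x => ?_)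
    have hlip : |g x| ≤ K * ‖x - x₀‖ := by
      simpa [hx₀, dist_eq_norm] using hg.dist_le_mul x x₀
    rw [Real.norm_eq_abs, Real.norm_eq_abs, abs_pow, abs_pow, abs_norm, ← mul_pow]
    exact pow_le_pow_left₀ (abs_nonneg _) hlip 2
  refine HasFDerivAt.of_isLittleO ?_
  simpa [hx₀] using hquadratic.trans_isLittleO (isLittleO_pow_sub_sub x₀ one_lt_two)

theorem hasFDerivAt_sq_of_lipschitzWith (hg : LipschitzWith K g) (hx₀ : g x₀ = 0)
    (hdiff : DifferentiableOn ℝ g {x₀}ᶜ) (x : E) :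
    HasFDerivAt (fun x => g x ^ 2) ((2 * g x) • fderiv ℝ g x) x := by
  rcases eq_or_ne x x₀ with rfl | hx
  · simpa [hx₀] using hasFDerivAt_sq_of_lipschitzWith_of_eq_zero hg hx₀
  · have hgx := (hdiff.differentiableAt (isOpen_compl_singleton.mem_nhds hx)).hasFDerivAt
    exact ((hasDerivAt_pow 2 (g x)).comp_hasFDerivAt x hgx).congr_fderiv (by simp)

theorem contDiff_one_sq_of_lipschitzWith (hg : LipschitzWith K g) (hx₀ : g x₀ = 0)
    (hsmooth : ContDiffOn ℝ 1 g {x₀}ᶜ) : ContDiff ℝ 1 fun x => g x ^ 2 := by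
  have hderiv := hasFDerivAt_sq_of_lipschitzWith hg hx₀ (hsmooth.differentiableOn one_ne_zero)
  have hfderiv : fderiv ℝ (fun x => g x ^ 2) = fun x => (2 * g x) • fderiv ℝ g x :=
    funext fun x => (hderiv x).fderiv
  rw [contDiff_one_iff_fderiv, hfderiv]
  refine ⟨fun x => (hderiv x).differentiableAt, continuous_iff_continuousAt.2 fun x => ?_⟩
  have hcoeff : Continuous fun x => 2 * g x := continuous_const.mul hg.continuous
  rcases eq_or_ne x x₀ with rfl | hx
  · have hbounded : IsBoundedUnder (· ≤ ·) (𝓝 x) fun y => ‖fderiv ℝ g y‖ :=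
      isBoundedUnder_of ⟨K, fun _ => norm_fderiv_le_of_lipschitz ℝ hg⟩
    have hzero : Tendsto (fun y => 2 * g y) (𝓝 x) (𝓝 0) := by
      simpa [hx₀] using hcoeff.tendsto x
    simpa [ContinuousAt, hx₀] using hzero.zero_smul_isBoundedUnder_le hbounded
  · have hcont := hsmooth.continuousOn_fderiv_of_isOpen isOpen_compl_singleton le_rfl
    exact hcoeff.continuousAt.smul (hcont.continuousAt (isOpen_compl_singleton.mem_nhds hx))

end SquareOfLipschitz

noncomputable def fischerBurmeister (p : ℝ × ℝ) : ℝ :=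
  p.1 + p.2 - Real.sqrt (p.1 ^ 2 + p.2 ^ 2)

theorem fischerBurmeister_zero : fischerBurmeister 0 = 0 := by
  simp [fischerBurmeister]

theorem sqrt_fst_sq_add_snd_sq_eq_norm_toLp (p : ℝ × ℝ) :
    Real.sqrt (p.1 ^ 2 + p.2 ^ 2) = ‖WithLp.toLp 2 p‖ := by
  simp [WithLp.prod_norm_eq_of_L2]

theorem exists_lipschitzWith_fischerBurmeister : ∃ K, LipschitzWith K fischerBurmeister := by
  have hnorm := lipschitzWith_one_norm.comp
    (WithLp.prodContinuousLinearEquiv 2 ℝ ℝ ℝ).symm.toContinuousLinearMap.lipschitz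
  have hfb : fischerBurmeister = fun p => p.1 + p.2 - ‖WithLp.toLp 2 p‖ := by
    funext p
    rw [fischerBurmeister, sqrt_fst_sq_add_snd_sq_eq_norm_toLp]
  exact hfb ▸ ⟨_, (LipschitzWith.prod_fst.add LipschitzWith.prod_snd).sub hnorm⟩

theorem fst_sq_add_snd_sq_ne_zero {p : ℝ × ℝ} (hp : p ≠ 0) : p.1 ^ 2 + p.2 ^ 2 ≠ 0 := by
  intro h
  obtain ⟨h₁, h₂⟩ := (add_eq_zero_iff_of_nonneg (sq_nonneg p.1) (sq_nonneg p.2)).1 h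
  exact hp (Prod.ext (pow_eq_zero_iff two_ne_zero |>.1 h₁) (pow_eq_zero_iff two_ne_zero |>.1 h₂))

theorem contDiffOn_fischerBurmeister {n : WithTop ℕ∞} :
    ContDiffOn ℝ n fischerBurmeister {0}ᶜ := fun _ hp =>
  ((contDiffAt_fst.add contDiffAt_snd).sub
    (((contDiffAt_fst.pow 2).add (contDiffAt_snd.pow 2)).sqrt
      (fst_sq_add_snd_sq_ne_zero hp))).contDiffWithinAt

theorem fb_sq_contDiff :
    ContDiff ℝ 1 (fun p : ℝ × ℝ =>
      (p.1 + p.2 - Real.sqrt (p.1 ^ 2 + p.2 ^ 2)) ^ 2) := by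
  obtain ⟨K, hK⟩ := exists_lipschitzWith_fischerBurmeister
  exact contDiff_one_sq_of_lipschitzWith hK fischerBurmeister_zero contDiffOn_fischerBurmeister
end

section
/- For the Fischer-Burmeister function φ and all a, b ≥ 0, (2 − √2)·min(a,b) ≤ φ(a,b) ≤ 2·min(a,b). -/
noncomputable def fb (a b : ℝ) : ℝ := a + b - Real.sqrt (a ^ 2 + b ^ 2)

lemma fb_key (a b : ℝ) (ha : 0 ≤ a) (hab : a ≤ b) :
    (2 - Real.sqrt 2) * a ≤ fb a b ∧ fb a b ≤ 2 * a := by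
  have hb : 0 ≤ b := ha.trans hab
  have hs2 : Real.sqrt 2 ^ 2 = 2 := Real.sq_sqrt (by norm_num)
  have hs2ge : 1 ≤ Real.sqrt 2 := by
    nlinarith [Real.sqrt_nonneg 2]
  constructor
  · have h1 : Real.sqrt (a ^ 2 + b ^ 2) ≤ b + (Real.sqrt 2 - 1) * a := by
      have hrhs : 0 ≤ b + (Real.sqrt 2 - 1) * a := by nlinarith
      rw [show b + (Real.sqrt 2 - 1) * a = Real.sqrt ((b + (Real.sqrt 2 - 1) * a) ^ 2) from
        (Real.sqrt_sq hrhs).symm]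
      apply Real.sqrt_le_sqrt
      nlinarith [mul_nonneg (mul_nonneg (sub_nonneg.2 hs2ge) ha) (sub_nonneg.2 hab)]
    unfold fb; nlinarith
  · have h2 : b ≤ Real.sqrt (a ^ 2 + b ^ 2) := by
      exact (Real.le_sqrt hb (by positivity)).2 (by nlinarith)
    unfold fb; nlinarith

theorem fb_min_equiv (a b : ℝ) (ha : 0 ≤ a) (hb : 0 ≤ b) :
    (2 - Real.sqrt 2) * min a b ≤ fb a b ∧ fb a b ≤ 2 * min a b := by
  rcases le_total a b with h | h
  · rw [min_eq_left h]; exact fb_key a b ha h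
  · rw [min_eq_right h]
    have := fb_key b a hb h
    have hcomm : fb b a = fb a b := by unfold fb; ring_nf
    rw [hcomm] at this
    exact this
end
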